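/- Orthogonal plane split modulus identity for quaternions: for every quaternion q ∈ ℍ, writing q₊ = (1/2)(q + i·q·j) and q₋ = (1/2)(q − i·q·j) (so q = q₊ + q₋), one has |q|² = |q₊|² + |q₋|². Moreover, for any two quaternions p, r ∈ ℍ, the scalar (real) part of r₊ · conj(p₋) vanishes: Sc(r₊ · conj(p₋)) = 0. -/

import Mathlib

/-!
The map `q ↦ i q j` is a real-linear isometry of `ℍ` (as `|i| = |j| = 1`) and an involution
(as `i² = j² = -1`). The `±1` eigenspaces of an isometric involution are orthogonal, and `q₊`, `q₋`
are the projections of `q` onto them; the scalar part of `r₊ · conj(p₋)` is the inner product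
`⟪r₊, p₋⟫`, and the modulus identity is Pythagoras for `q = q₊ + q₋`.
-/

noncomputable section

/-- The quaternion unit i. -/
def qI : Quaternion ℝ := ⟨0, 1, 0, 0⟩

/-- The quaternion unit j. -/
def qJ : Quaternion ℝ := ⟨0, 0, 1, 0⟩

/-- The "positive" part q₊ = (1/2)(q + i q j) of the orthogonal plane split. -/
def opsPlus (q : Quaternion ℝ) : Quaternion ℝ := (1 / 2 : ℝ) • (q + qI * q * qJ)

/-- The "negative" part q₋ = (1/2)(q − i q j) of the orthogonal plane split. -/
def opsMinus (q : Quaternion ℝ) : Quaternion ℝ := (1 / 2 : ℝ) • (q - qI * q * qJ)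

theorem inner_add_map_sub_map_eq_zero {𝕜 E : Type*} [RCLike 𝕜] [SeminormedAddCommGroup E]
    [InnerProductSpace 𝕜 E] (T : E →ₗᵢ[𝕜] E) (hT : Function.Involutive T) (x y : E) :
    inner 𝕜 (x + T x) (y - T y) = 0 := by
  have hswap : inner 𝕜 (T x) y = inner 𝕜 x (T y) := by
    conv_lhs => rw [← hT y]
    exact T.inner_map_map x (T y)
  rw [inner_add_left, inner_sub_right, inner_sub_right, T.inner_map_map, hswap]
  ring

theorem norm_eq_one_of_mul_self_eq_neg_one {R : Type*} [NormedDivisionRing R] {a : R}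
    (h : a * a = -1) : ‖a‖ = 1 :=
  (pow_eq_one_iff_of_nonneg (norm_nonneg a) two_ne_zero).mp <| by
    rw [sq, ← norm_mul, h, norm_neg, norm_one]

theorem qI_mul_qI : qI * qI = -1 := by
  ext <;> simp [Quaternion.re_one, Quaternion.imI_one, Quaternion.imJ_one, Quaternion.imK_one]
    <;> simp [qI]

theorem qJ_mul_qJ : qJ * qJ = -1 := by
  ext <;> simp [Quaternion.re_one, Quaternion.imI_one, Quaternion.imJ_one, Quaternion.imK_one]
    <;> simp [qJ]

def opsReflection : Quaternion ℝ →ₗᵢ[ℝ] Quaternion ℝ where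
  toFun q := qI * q * qJ
  map_add' p q := by rw [mul_add, add_mul]
  map_smul' c q := by rw [RingHom.id_apply, mul_smul_comm, smul_mul_assoc]
  norm_map' q := by
    change ‖qI * q * qJ‖ = ‖q‖
    rw [norm_mul, norm_mul, norm_eq_one_of_mul_self_eq_neg_one qI_mul_qI,
      norm_eq_one_of_mul_self_eq_neg_one qJ_mul_qJ, one_mul, mul_one]

theorem opsReflection_apply (q : Quaternion ℝ) : opsReflection q = qI * q * qJ := rfl

theorem opsReflection_involutive : Function.Involutive opsReflection := fun q => by
  change qI * (qI * q * qJ) * qJ = q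
  rw [← mul_assoc, ← mul_assoc, qI_mul_qI, mul_assoc, qJ_mul_qJ]
  simp

theorem opsPlus_add_opsMinus (q : Quaternion ℝ) : opsPlus q + opsMinus q = q := by
  rw [opsPlus, opsMinus, ← smul_add, add_add_sub_cancel, ← two_smul ℝ q, smul_smul]
  norm_num

theorem inner_opsPlus_opsMinus (r p : Quaternion ℝ) : inner ℝ (opsPlus r) (opsMinus p) = 0 := by
  rw [opsPlus, opsMinus, inner_smul_left, inner_smul_right, ← opsReflection_apply,
    ← opsReflection_apply,
    inner_add_map_sub_map_eq_zero opsReflection opsReflection_involutive, mul_zero, mul_zero]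

/-- Orthogonal plane split modulus identity: |q|² = |q₊|² + |q₋|², and for any two
quaternions p, r the scalar part of r₊ · conj(p₋) vanishes. -/
theorem ops_modulus_identity :
    (∀ q : Quaternion ℝ, ‖q‖ ^ 2 = ‖opsPlus q‖ ^ 2 + ‖opsMinus q‖ ^ 2) ∧
      (∀ p r : Quaternion ℝ, (opsPlus r * star (opsMinus p)).re = 0) := by
  refine ⟨fun q => ?_, fun p r => ?_⟩
  · conv_lhs => rw [← opsPlus_add_opsMinus q]
    simpa only [sq] using norm_add_sq_eq_norm_sq_add_norm_sq_real (inner_opsPlus_opsMinus q q)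
  · rw [← Quaternion.inner_def, inner_opsPlus_opsMinus]

end
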